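/- Let ν > 0, k > 2, K₀ > 0, χ ∈ ((k−2)/(k−1), 1), and suppose ω is a modulus of continuity (continuous, nondecreasing, ω(0)=0). Then there exists K* > 0 such that for all K ≥ K*: whenever s > 0 satisfies both s ≤ (K₀/K)^{1/(χ−(k−2)/(k−1))} and s·(Kχ s^{χ−1})^{k−1} ≤ K₀^{k−1}, one has ν K χ(1−χ) s^{χ−2} ≥ ω(2s^{(k−1−β)/(k−1)}K₀^β + s)·K₀^{α(k−1)}·(Kχ s^{χ−1})^k for any fixed α ∈ [0,1] and 0 ≤ β < k−1. -/
import Mathlib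


/-- quantitative form of Step 1.1 of the Hölder improvement. -/
theorem stmt16 (ν k K₀ χ α β : ℝ) (hν : 0 < ν) (hk : 2 < k) (hK₀ : 0 < K₀)
    (hχ₁ : (k-2)/(k-1) < χ) (hχ₂ : χ < 1) (hα : α ∈ Set.Icc (0:ℝ) 1)
    (hβ : 0 ≤ β) (hβk : β < k-1)
    (ω : ℝ → ℝ) (hωc : Continuous ω) (hωm : Monotone ω) (hω0 : ω 0 = 0) :
    ∃ Kstar : ℝ, 0 < Kstar ∧ ∀ K ≥ Kstar, ∀ s : ℝ, 0 < s →
      s ≤ (K₀ / K) ^ (1/(χ - (k-2)/(k-1))) →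
      s * (K * χ * s ^ (χ-1)) ^ (k-1) ≤ K₀ ^ (k-1) →
      ω (2 * s ^ ((k-1-β)/(k-1)) * K₀ ^ β + s) * K₀ ^ (α*(k-1)) * (K * χ * s ^ (χ-1)) ^ k
        ≤ ν * K * χ * (1-χ) * s ^ (χ-2) := by
  obtain ⟨hα0, hα1⟩ := hα
  have hk1 : (0:ℝ) < k - 1 := by linarith
  have hχ0 : 0 < χ := lt_trans (div_pos (by linarith) hk1) hχ₁
  have hc : 0 < χ - (k-2)/(k-1) := by linarith
  set c := χ - (k-2)/(k-1) with hcdef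
  have hθ : 0 < (k-1-β)/(k-1) := div_pos (by linarith) hk1
  set θ := (k-1-β)/(k-1) with hθdef
  have hB : 0 < K₀ ^ β := Real.rpow_pos_of_pos hK₀ β
  set B := K₀ ^ β with hBdef
  have hKα : 0 < K₀ ^ (α*(k-1)) := Real.rpow_pos_of_pos hK₀ _
  have hKk : 0 < K₀ ^ (k-1) := Real.rpow_pos_of_pos hK₀ _
  have hν1 : 0 < ν * (1-χ) := mul_pos hν (by linarith)
  have hε : 0 < ν*(1-χ)/(K₀ ^ (α*(k-1)) * K₀ ^ (k-1)) := div_pos hν1 (by positivity)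
  set ε := ν*(1-χ)/(K₀ ^ (α*(k-1)) * K₀ ^ (k-1)) with hεdef
  obtain ⟨δ, hδ0, hδ⟩ := Metric.continuousAt_iff.mp (hωc.continuousAt (x := 0)) ε hε
  set s₀ := min ((δ/(4*B)) ^ (1/θ)) (δ/4) with hs₀def
  have hs₀ : 0 < s₀ := lt_min (Real.rpow_pos_of_pos (by positivity) _) (by positivity)
  have hs₀c : 0 < s₀ ^ c := Real.rpow_pos_of_pos hs₀ _
  refine ⟨max 1 (K₀ / s₀ ^ c), lt_of_lt_of_le one_pos (le_max_left _ _), ?_⟩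
  intro K hKge s hs h1 h2
  have hK1 : (1:ℝ) ≤ K := le_trans (le_max_left _ _) hKge
  have hK : 0 < K := lt_of_lt_of_le one_pos hK1
  -- s ≤ s₀
  have hss₀ : s ≤ s₀ := by
    have hKc : K₀ / K ≤ s₀ ^ c := by
      rw [div_le_iff₀ hK]
      have h' : K₀ / s₀ ^ c ≤ K := le_trans (le_max_right _ _) hKge
      calc K₀ = (K₀ / s₀ ^ c) * s₀ ^ c := by field_simp
        _ ≤ K * s₀ ^ c := mul_le_mul_of_nonneg_right h' hs₀c.le
        _ = s₀ ^ c * K := mul_comm _ _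
    have hmono : (K₀/K) ^ (1/c) ≤ (s₀ ^ c) ^ (1/c) :=
      Real.rpow_le_rpow (by positivity) hKc (by positivity)
    have heq : (s₀ ^ c) ^ (1/c) = s₀ := by
      rw [← Real.rpow_mul hs₀.le, mul_one_div, div_self hc.ne', Real.rpow_one]
    rw [heq] at hmono
    exact le_trans h1 hmono
  -- the argument of ω is small
  have hA0 : (0:ℝ) ≤ 2 * s ^ θ * B + s := by positivity
  have hAδ : 2 * s ^ θ * B + s < δ := by
    have h1' : s ^ θ ≤ s₀ ^ θ := Real.rpow_le_rpow hs.le hss₀ hθ.le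
    have h2' : s₀ ^ θ ≤ δ/(4*B) := by
      calc s₀ ^ θ ≤ ((δ/(4*B)) ^ (1/θ)) ^ θ :=
            Real.rpow_le_rpow hs₀.le (min_le_left _ _) hθ.le
        _ = δ/(4*B) := by
            rw [← Real.rpow_mul (by positivity), one_div, inv_mul_cancel₀ hθ.ne',
              Real.rpow_one]
    have h3' : s ^ θ * B ≤ δ/4 := by
      have := mul_le_mul_of_nonneg_right (h1'.trans h2') hB.le
      calc s ^ θ * B ≤ (δ/(4*B)) * B := this
        _ = δ/4 := by field_simp
    have h4' : s ≤ δ/4 := le_trans hss₀ (min_le_right _ _)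
    nlinarith
  set A := 2 * s ^ θ * B + s with hAdef
  have hωA : ω A < ε := by
    have hd : dist A 0 < δ := by
      rw [Real.dist_eq, sub_zero, abs_of_nonneg hA0]; exact hAδ
    have := hδ hd
    rw [Real.dist_eq, hω0, sub_zero] at this
    exact lt_of_le_of_lt (le_abs_self _) this
  have hωA0 : 0 ≤ ω A := hω0 ▸ hωm hA0
  -- main estimate
  set P := K * χ * s ^ (χ-1) with hPdef
  have hP : 0 < P := by positivity
  have hPk1 : 0 < P ^ (k-1) := Real.rpow_pos_of_pos hP _
  have hPk : 0 < P ^ k := Real.rpow_pos_of_pos hP _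
  have hPsplit : P ^ k = P ^ (k-1) * P := by
    rw [← Real.rpow_add_one hP.ne' (k-1), sub_add_cancel]
  have hssplit : s ^ (χ-1) = s ^ (χ-2) * s := by
    rw [← Real.rpow_add_one hs.ne' (χ-2)]; congr 1; ring
  calc ω A * K₀ ^ (α*(k-1)) * P ^ k
      ≤ ε * K₀ ^ (α*(k-1)) * P ^ k := by gcongr
    _ = ν*(1-χ) * P ^ k / K₀ ^ (k-1) := by
        rw [hεdef]; field_simp
    _ ≤ ν*(1-χ) * P ^ k / (s * P ^ (k-1)) := by
        gcongr <;> positivity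
    _ = ν*(1-χ) * (P / s) := by
        rw [hPsplit]; field_simp
    _ = ν * K * χ * (1-χ) * s ^ (χ-2) := by
        rw [hPdef, hssplit]; field_simp
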